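/- Let Λ be a compact self-adjoint operator on a separable Hilbert space Z with eigenbasis (φₖ) and positive eigenvalues λₖ, let p be a continuous bounded nonnegative function on an interval containing the eigenvalues satisfying p(λ)² + (2/λ)p(λ) − 1 = 0 for all λ in that interval, and set P = p(Λ), A = −Λ^{-1} (with domain the range of Λ). Then for every z in the domain of A: (A P + P A − P² + I)z = 0, i.e. P solves the operational Riccati equation with B = C = S = I. -/

import Mathlib

/-!
Everything is diagonal in the eigenbasis `b`: a continuous operator sending each `b k` to a
multiple `μ k • b k` multiplies the `k`-th coefficient by `μ k`, and `P (b k) = p (λₖ) • b k`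
is read off from the series defining `P`. Coefficientwise the identity becomes
`λ p(λ)² + 2 p(λ) − λ = 0`, the scalar Riccati equation multiplied by `λ ≠ 0`.
-/

open scoped InnerProductSpace

section

variable {ι 𝕜 E : Type*} [RCLike 𝕜] [NormedAddCommGroup E] [InnerProductSpace 𝕜 E]

theorem Orthonormal.tsum_mul_inner_smul {v : ι → E} (hv : Orthonormal 𝕜 v) (c : ι → 𝕜) (k : ι) :
    ∑' i, (c i * ⟪v k, v i⟫_𝕜) • v i = c k • v k := by
  classical
  rw [tsum_eq_single k fun i hi => by simp [orthonormal_iff_ite.mp hv k i, Ne.symm hi]]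
  simp [hv.1 k]

theorem HilbertBasis.ext_inner (b : HilbertBasis ι 𝕜 E) {x y : E}
    (h : ∀ i, ⟪b i, x⟫_𝕜 = ⟪b i, y⟫_𝕜) : x = y :=
  b.repr.injective <| lp.ext <| funext fun i => by simp [b.repr_apply_apply, h i]

theorem HilbertBasis.inner_apply_of_apply_eq_smul (b : HilbertBasis ι 𝕜 E) {T : E →L[𝕜] E}
    {μ : ι → 𝕜} (hT : ∀ i, T (b i) = μ i • b i) (z : E) (j : ι) :
    ⟪b j, T z⟫_𝕜 = μ j * ⟪b j, z⟫_𝕜 := by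
  classical
  have hsum := ((b.hasSum_repr z).mapL T).mapL (innerSL 𝕜 (b j))
  refine (hsum.unique (hasSum_single j fun i hi => ?_)).trans ?_
  · simp [hT, orthonormal_iff_ite.mp b.orthonormal j i, Ne.symm hi]
  · simp [hT, b.orthonormal.1 j, b.repr_apply_apply, mul_comm]

end

theorem riccati_operator_factorization_heat_general
    {Z : Type*} [NormedAddCommGroup Z] [InnerProductSpace ℝ Z] [CompleteSpace Z]
    (b : HilbertBasis ℕ ℝ Z) (Λ : Z →L[ℝ] Z)
    (lam : ℕ → ℝ) (heig : ∀ k, Λ (b k) = lam k • b k)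
    (Iσ : Set ℝ) (hIσ : ∀ k, lam k ∈ Iσ) (hIσpos : ∀ l ∈ Iσ, 0 < l)
    (p : ℝ → ℝ)
    (hRic : ∀ l ∈ Iσ, p l ^ 2 + (2 / l) * p l - 1 = 0)
    (P : Z →L[ℝ] Z)
    (hP : ∀ z, P z = ∑' k, (p (lam k) * ⟪z, b k⟫_ℝ) • b k)
    (A : Z → Z) (hA : ∀ w, A (Λ w) = -w) :
    ∀ w : Z, A (P (Λ w)) + P (A (Λ w)) - P (P (Λ w)) + Λ w = 0 := by
  intro w
  have hΛcoef := b.inner_apply_of_apply_eq_smul heig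
  have hPcoef := b.inner_apply_of_apply_eq_smul fun k => (hP (b k)).trans <|
    b.orthonormal.tsum_mul_inner_smul (fun i => p (lam i)) k
  have hcomm : P (Λ w) = Λ (P w) := b.ext_inner fun j => by
    rw [hPcoef, hΛcoef, hΛcoef, hPcoef, mul_left_comm]
  have hquad : P (P (Λ w)) = Λ w - (2 : ℝ) • P w := b.ext_inner fun j => by
    have hl := (hIσpos _ (hIσ j)).ne'
    have hRicj := hRic _ (hIσ j)
    field_simp at hRicj
    rw [hPcoef, hPcoef, hΛcoef, inner_sub_right, inner_smul_right, hΛcoef, hPcoef]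
    linear_combination ⟪b j, w⟫_ℝ * hRicj
  rw [hquad, hcomm, hA, hA, map_neg, two_smul]
  abel

/-- Factorization of the Riccati operator for the heat equation: with Λ compact
self-adjoint with positive eigenvalues λₖ ∈ Iσ, p continuous bounded nonnegative
on Iσ solving p² + (2/λ)p − 1 = 0 there, P = p(Λ) and A = −Λ⁻¹ (on the range of
Λ), one has (A P + P A − P² + I) z = 0 for every z = Λw in the domain of A. -/
theorem riccati_operator_factorization_heat
    {Z : Type*} [NormedAddCommGroup Z] [InnerProductSpace ℝ Z] [CompleteSpace Z]
    (b : HilbertBasis ℕ ℝ Z) (Λ : Z →L[ℝ] Z)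
    (hΛc : IsCompactOperator Λ) (hΛsa : IsSelfAdjoint Λ)
    (lam : ℕ → ℝ) (heig : ∀ k, Λ (b k) = lam k • b k)
    (hΛ : ∀ z, Λ z = ∑' k, (lam k * ⟪z, b k⟫_ℝ) • b k)
    (Iσ : Set ℝ) (hIσ : ∀ k, lam k ∈ Iσ) (hIσpos : ∀ l ∈ Iσ, 0 < l)
    (p : ℝ → ℝ) (hpc : ContinuousOn p Iσ)
    (hpb : BddAbove ((fun l => |p l|) '' Iσ))
    (hpnn : ∀ l ∈ Iσ, 0 ≤ p l)
    (hRic : ∀ l ∈ Iσ, p l ^ 2 + (2 / l) * p l - 1 = 0)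
    (P : Z →L[ℝ] Z)
    (hP : ∀ z, P z = ∑' k, (p (lam k) * ⟪z, b k⟫_ℝ) • b k)
    (A : Z → Z) (hA : ∀ w, A (Λ w) = -w) :
    ∀ w : Z, A (P (Λ w)) + P (A (Λ w)) - P (P (Λ w)) + Λ w = 0 :=
  riccati_operator_factorization_heat_general b Λ lam heig Iσ hIσ hIσpos p hRic P hP A hA
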